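/- arXiv:1112.2762 — 2 statements merged into one kernel-verified Lean document; each statement's English description precedes it below -/
import Mathlib

section
/- (Fisher's Inequality) In any (v,b,r,k,λ)-BIBD, b ≥ v. -/
/-- Counting lemma for BIBDs: `r * (k - 1) = (v - 1) * lam`. -/
lemma fisher_count {X ι : Type*} [Fintype X] [Fintype ι] [DecidableEq X] (B : ι → Finset X)
    (v r k lam : ℕ) (hv : Fintype.card X = v)
    (hreg : ∀ x : X, (Finset.univ.filter (fun i => x ∈ B i)).card = r)
    (hunif : ∀ i, (B i).card = k)
    (hpair : ∀ x y : X, x ≠ y →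
      (Finset.univ.filter (fun i => x ∈ B i ∧ y ∈ B i)).card = lam)
    (x : X) : r * (k - 1) = (v - 1) * lam := by
  classical
  set T := Finset.univ.filter (fun i => x ∈ B i) with hT
  have h1 : ∑ i ∈ T, ((B i).erase x).card = r * (k - 1) := by
    rw [Finset.sum_congr rfl (fun i hi => ?_), Finset.sum_const, hreg, smul_eq_mul]
    rw [Finset.card_erase_of_mem (by simpa [hT] using hi), hunif]
  have h2 : ∀ i ∈ T, ((B i).erase x).card =
      ∑ y ∈ Finset.univ.erase x, (if y ∈ B i then 1 else 0) := by
    intro i hi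
    rw [← Finset.sum_filter, Finset.sum_const, smul_eq_mul, mul_one]
    congr 1
    ext y
    simp [Finset.mem_erase, and_comm]
  rw [Finset.sum_congr rfl h2, Finset.sum_comm] at h1
  have key : ∀ y ∈ Finset.univ.erase x, (∑ i ∈ T, if y ∈ B i then 1 else 0) = lam := by
    intro y hy
    rw [← Finset.sum_filter, Finset.sum_const, smul_eq_mul, mul_one, hT,
      Finset.filter_filter]
    exact hpair x y (by simp only [Finset.mem_erase] at hy; exact hy.1.symm)
  rw [← h1, Finset.sum_congr rfl key, Finset.sum_const, smul_eq_mul,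
    Finset.card_erase_of_mem (Finset.mem_univ x), Finset.card_univ, hv]

/-- Fisher's inequality, assuming `lam < r`. -/
lemma fisher_of_lam_lt_r {X ι : Type*} [Fintype X] [Fintype ι] [DecidableEq X] (B : ι → Finset X)
    (v b r lam : ℕ) (hv : Fintype.card X = v) (hb : Fintype.card ι = b)
    (hreg : ∀ x : X, (Finset.univ.filter (fun i => x ∈ B i)).card = r)
    (hlamr : lam < r)
    (hpair : ∀ x y : X, x ≠ y →
      (Finset.univ.filter (fun i => x ∈ B i ∧ y ∈ B i)).card = lam) :
    b ≥ v := by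
  classical
  set N : Matrix X ι ℝ := Matrix.of fun x i => if x ∈ B i then 1 else 0 with hN
  set A : Matrix Unit X ℝ := Matrix.of fun _ _ => Real.sqrt lam with hA
  have hM : N * N.conjTranspose = ((r - lam : ℕ) : Matrix X X ℝ) + A.conjTranspose * A := by
    ext x y
    have hent : ∀ i, (if x ∈ B i then (1:ℝ) else 0) * (if y ∈ B i then 1 else 0)
        = if x ∈ B i ∧ y ∈ B i then 1 else 0 := by
      intro i; by_cases h1 : x ∈ B i <;> by_cases h2 : y ∈ B i <;> simp [h1, h2]
    have lhs : (N * N.conjTranspose) x y =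
        ((Finset.univ.filter (fun i => x ∈ B i ∧ y ∈ B i)).card : ℝ) := by
      simp only [Matrix.mul_apply, Matrix.conjTranspose_apply, hN, Matrix.of_apply,
        star_trivial, hent, Finset.sum_boole]
    have rhs : (A.conjTranspose * A) x y = (lam : ℝ) := by
      simp [Matrix.mul_apply, hA, Real.mul_self_sqrt (Nat.cast_nonneg lam)]
    rw [lhs, Matrix.add_apply, rhs]
    rcases eq_or_ne x y with h | h
    · subst h
      have : (Finset.univ.filter (fun i => x ∈ B i ∧ x ∈ B i)) =
          (Finset.univ.filter (fun i => x ∈ B i)) := by simp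
      rw [this, hreg, show ((r - lam : ℕ) : Matrix X X ℝ) x x = ((r - lam : ℕ) : ℝ) by
        simp [← Matrix.diagonal_natCast, Matrix.diagonal_apply]]
      rw [Nat.cast_sub hlamr.le]; ring
    · rw [hpair x y h, show ((r - lam : ℕ) : Matrix X X ℝ) x y = 0 by
        simp [← Matrix.diagonal_natCast, Matrix.diagonal_apply, h]]
      ring
  have hpd : (N * N.conjTranspose).PosDef := by
    rw [hM]
    exact (Matrix.PosDef.natCast (r - lam) (by omega)).add_posSemidef
      (Matrix.posSemidef_conjTranspose_mul_self A)
  have h1 : (N * N.conjTranspose).rank = Fintype.card X :=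
    Matrix.rank_of_isUnit _ hpd.isUnit
  have h2 : (N * N.conjTranspose).rank ≤ Fintype.card ι :=
    le_trans (Matrix.rank_mul_le_left N N.conjTranspose) (Matrix.rank_le_card_width N)
  rw [h1, hv, hb] at *
  omega

/-- Fisher's Inequality: in any (v,b,r,k,λ)-BIBD, b ≥ v. -/
theorem fisher_inequality {X ι : Type*} [Fintype X] [Fintype ι] [DecidableEq X] (B : ι → Finset X)
    (v b r k lam : ℕ) (hv : Fintype.card X = v) (hb : Fintype.card ι = b)
    (hreg : ∀ x : X, (Finset.univ.filter (fun i => x ∈ B i)).card = r)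
    (hunif : ∀ i, (B i).card = k) (hk2 : 2 ≤ k) (hkv : k < v) (hlam : 1 ≤ lam)
    (hpair : ∀ x y : X, x ≠ y →
      (Finset.univ.filter (fun i => x ∈ B i ∧ y ∈ B i)).card = lam) :
    b ≥ v := by
  have hXpos : 0 < Fintype.card X := by omega
  obtain ⟨x⟩ := Fintype.card_pos_iff.mp hXpos
  have hcount := fisher_count B v r k lam hv hreg hunif hpair x
  have hlamr : lam < r := by
    rcases lt_or_ge lam r with h | h
    · exact h
    exfalso
    have ha : r * (k - 1) ≤ lam * (k - 1) := Nat.mul_le_mul_right _ h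
    have hb2 : lam * (k - 1) < lam * (v - 1) := by
      have h0 : 0 < lam := hlam
      have h1 : k - 1 < v - 1 := by omega
      exact Nat.mul_lt_mul_of_le_of_lt (le_refl lam) h1 h0
    rw [hcount, mul_comm] at ha
    omega
  exact fisher_of_lam_lt_r B v b r lam hv hb hreg hlamr hpair
end

section
/- In a symmetric BIBD (a (v,b,r,k,λ)-BIBD with b = v), any two distinct blocks intersect in exactly λ points. -/
open Finset

/-- In a symmetric BIBD (b = v), any two distinct blocks intersect in exactly λ points. -/
theorem symmetric_bibd_block_intersection {X ι : Type*} [Fintype X] [Fintype ι]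
    [DecidableEq X] (B : ι → Finset X)
    (v r k lam : ℕ) (hv : Fintype.card X = v) (hb : Fintype.card ι = v)
    (hreg : ∀ x : X, (Finset.univ.filter (fun i => x ∈ B i)).card = r)
    (hunif : ∀ i, (B i).card = k) (hkv : k < v)
    (hpair : ∀ x y : X, x ≠ y →
      (Finset.univ.filter (fun i => x ∈ B i ∧ y ∈ B i)).card = lam)
    (i₁ i₂ : ι) (hne : i₁ ≠ i₂) :
    (B i₁ ∩ B i₂).card = lam := by
  classical
  have hv1 : 1 ≤ v := by omega
  -- r = k
  have hrk : r = k := by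
    have h1 : ∑ x : X, (univ.filter (fun i => x ∈ B i)).card
        = ∑ i : ι, (B i).card := by
      simp only [Finset.card_filter]
      rw [Finset.sum_comm]
      apply Finset.sum_congr rfl
      intro i _
      simp [Finset.sum_ite_mem]
    have h2 : v * r = v * k := by
      calc v * r = ∑ x : X, r := by rw [Finset.sum_const, Finset.card_univ, hv]; ring
      _ = ∑ x : X, (univ.filter (fun i => x ∈ B i)).card := by
          exact (Finset.sum_congr rfl (fun x _ => (hreg x))).symm
      _ = ∑ i : ι, (B i).card := h1
      _ = ∑ i : ι, k := Finset.sum_congr rfl (fun i _ => hunif i)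
      _ = v * k := by rw [Finset.sum_const, Finset.card_univ, hb]; ring
    exact Nat.eq_of_mul_eq_mul_left (by omega) h2
  -- Sum A : ∑_{j ≠ i₂} |B j ∩ B i₂| = k(r-1)
  have hA : ∑ j ∈ univ.erase i₂, ((B j ∩ B i₂).card : ℤ) = (k : ℤ) * k - k := by
    have e1 : ∀ j, ((B j ∩ B i₂).card : ℤ) = ∑ x ∈ B i₂, if x ∈ B j then (1:ℤ) else 0 := by
      intro j
      rw [Finset.sum_ite_mem]
      simp [Finset.inter_comm]
    rw [Finset.sum_congr rfl (fun j _ => e1 j), Finset.sum_comm]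
    have e2 : ∀ x ∈ B i₂, (∑ j ∈ univ.erase i₂, if x ∈ B j then (1:ℤ) else 0)
        = (r : ℤ) - 1 := by
      intro x hx
      have hmem : i₂ ∈ univ.filter (fun j => x ∈ B j) := by simp [hx]
      have hr1 : 1 ≤ r := by
        rw [← hreg x]
        exact Finset.card_pos.mpr ⟨i₂, hmem⟩
      rw [Finset.sum_boole]
      rw [Finset.filter_erase]
      rw [Finset.card_erase_of_mem hmem, hreg x]
      push_cast [hr1]
      ring
    rw [Finset.sum_congr rfl e2, Finset.sum_const, hunif i₂, hrk]
    ring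
  -- Sum B : ∑_{j ≠ i₂} |B j ∩ B i₂| (|B j ∩ B i₂| - 1) = (k²-k)(λ-1)
  have hB : ∑ j ∈ univ.erase i₂,
      (((B j ∩ B i₂).card : ℤ) * (((B j ∩ B i₂).card : ℤ) - 1))
      = ((k : ℤ) * k - k) * ((lam : ℤ) - 1) := by
    have e1 : ∀ j, ((B j ∩ B i₂).card : ℤ) * (((B j ∩ B i₂).card : ℤ) - 1)
        = ∑ p ∈ (B i₂).offDiag, if p.1 ∈ B j ∧ p.2 ∈ B j then (1:ℤ) else 0 := by
      intro j
      rw [Finset.sum_boole]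
      have hset : (B i₂).offDiag.filter (fun p => p.1 ∈ B j ∧ p.2 ∈ B j)
          = (B j ∩ B i₂).offDiag := by
        ext ⟨x, y⟩
        simp only [Finset.mem_filter, Finset.mem_offDiag, Finset.mem_inter]
        tauto
      rw [hset, Finset.offDiag_card]
      have hle : (B j ∩ B i₂).card ≤ (B j ∩ B i₂).card * (B j ∩ B i₂).card := by
        nlinarith [Nat.zero_le ((B j ∩ B i₂).card)]
      push_cast [Nat.cast_sub hle]
      ring
    rw [Finset.sum_congr rfl (fun j _ => e1 j), Finset.sum_comm]
    have e2 : ∀ p ∈ (B i₂).offDiag,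
        (∑ j ∈ univ.erase i₂, if p.1 ∈ B j ∧ p.2 ∈ B j then (1:ℤ) else 0)
        = (lam : ℤ) - 1 := by
      rintro ⟨x, y⟩ hp
      rw [Finset.mem_offDiag] at hp
      obtain ⟨hx, hy, hxy⟩ := hp
      have hmem : i₂ ∈ univ.filter (fun j => x ∈ B j ∧ y ∈ B j) := by simp [hx, hy]
      have hl1 : 1 ≤ lam := by
        rw [← hpair x y hxy]
        exact Finset.card_pos.mpr ⟨i₂, hmem⟩
      rw [Finset.sum_boole, Finset.filter_erase, Finset.card_erase_of_mem hmem,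
        hpair x y hxy]
      push_cast [hl1]
      ring
    rw [Finset.sum_congr rfl e2, Finset.sum_const, Finset.offDiag_card, hunif i₂]
    have hle : k ≤ k * k := by nlinarith [Nat.zero_le k]
    rw [nsmul_eq_mul, Nat.cast_sub hle]
    push_cast
    ring
  -- relation λ(v-1) = k(k-1)
  have hD : (lam : ℤ) * ((v : ℤ) - 1) = (k : ℤ) * k - k := by
    have hX : Nonempty X := by
      rw [← Fintype.card_pos_iff, hv]; omega
    obtain ⟨x₀⟩ := hX
    have lhs : ∑ y ∈ univ.erase x₀, (lam : ℤ) = (lam : ℤ) * ((v : ℤ) - 1) := by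
      rw [Finset.sum_const, Finset.card_erase_of_mem (Finset.mem_univ x₀),
        Finset.card_univ, hv]
      rw [nsmul_eq_mul, Nat.cast_sub hv1]
      push_cast
      ring
    have mid : ∑ y ∈ univ.erase x₀, (lam : ℤ)
        = ∑ y ∈ univ.erase x₀,
            ∑ i : ι, if x₀ ∈ B i ∧ y ∈ B i then (1:ℤ) else 0 := by
      apply Finset.sum_congr rfl
      intro y hy
      have hyx : x₀ ≠ y := fun h => (Finset.mem_erase.mp hy).1 h.symm
      rw [Finset.sum_boole, ← hpair x₀ y hyx]
    have rhs : ∑ y ∈ univ.erase x₀,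
        (∑ i : ι, if x₀ ∈ B i ∧ y ∈ B i then (1:ℤ) else 0)
        = (k : ℤ) * k - k := by
      rw [Finset.sum_comm]
      have e2 : ∀ i : ι, (∑ y ∈ univ.erase x₀, if x₀ ∈ B i ∧ y ∈ B i then (1:ℤ) else 0)
          = if x₀ ∈ B i then (k : ℤ) - 1 else 0 := by
        intro i
        by_cases hx : x₀ ∈ B i
        · rw [Finset.sum_boole]
          have hset : (univ.erase x₀).filter (fun y => x₀ ∈ B i ∧ y ∈ B i)
              = (B i).erase x₀ := by
            ext y
            simp only [Finset.mem_filter, Finset.mem_erase, Finset.mem_univ, true_and]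
            tauto
          have hk1 : 1 ≤ k := by
            rw [← hunif i]
            exact Finset.card_pos.mpr ⟨x₀, hx⟩
          rw [hset, Finset.card_erase_of_mem hx, hunif i, if_pos hx]
          push_cast [hk1]
          ring
        · rw [if_neg hx]
          apply Finset.sum_eq_zero
          intro y _
          rw [if_neg (fun h => hx h.1)]
      rw [Finset.sum_congr rfl (fun i _ => e2 i)]
      rw [Finset.sum_ite, Finset.sum_const, Finset.sum_const]
      simp only [smul_zero, add_zero, nsmul_eq_mul]
      rw [hreg x₀, hrk]
      ring
    rw [← lhs, mid, rhs]
  -- variance argument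
  have key : ∑ j ∈ univ.erase i₂, (((B j ∩ B i₂).card : ℤ) - lam) ^ 2 = 0 := by
    have e : ∀ j ∈ univ.erase i₂, (((B j ∩ B i₂).card : ℤ) - lam) ^ 2
        = ((B j ∩ B i₂).card : ℤ) * (((B j ∩ B i₂).card : ℤ) - 1)
          - (2 * (lam : ℤ) - 1) * ((B j ∩ B i₂).card : ℤ) + (lam : ℤ) ^ 2 := by
      intro j _
      ring
    rw [Finset.sum_congr rfl e]
    rw [Finset.sum_add_distrib, Finset.sum_sub_distrib, ← Finset.mul_sum,
      Finset.sum_const, hA, hB]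
    have hcard : (univ.erase i₂).card = v - 1 := by
      rw [Finset.card_erase_of_mem (Finset.mem_univ i₂), Finset.card_univ, hb]
    rw [hcard]
    have hvcast : ((v - 1 : ℕ) : ℤ) = (v : ℤ) - 1 := by rw [Nat.cast_sub hv1]; push_cast; ring
    rw [nsmul_eq_mul, hvcast]
    linear_combination (lam : ℤ) * hD
  have hi₁ : i₁ ∈ univ.erase i₂ := Finset.mem_erase.mpr ⟨hne, Finset.mem_univ i₁⟩
  have h0 := (Finset.sum_eq_zero_iff_of_nonneg
    (fun j _ => sq_nonneg (((B j ∩ B i₂).card : ℤ) - lam))).mp key i₁ hi₁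
  have h1 : ((B i₁ ∩ B i₂).card : ℤ) = lam := by
    have := sq_eq_zero_iff.mp h0
    linarith
  exact_mod_cast h1
end
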